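/- arXiv:2010.06882 — 6 statements merged into one kernel-verified Lean document; each statement's English description precedes it below -/
import Mathlib

section
/- Let X be a topological space. If W is an open subset of X and A is a b-open subset of X, then W ∩ A is b-open. -/
/-- A subset `A` of a topological space is b-open if
`A ⊆ closure (interior A) ∪ interior (closure A)`. -/
def BOpen {X : Type*} [TopologicalSpace X] (A : Set X) : Prop :=
  A ⊆ closure (interior A) ∪ interior (closure A)

/-- The intersection of an open set and a b-open set is b-open. -/
theorem inter_open_bOpen {X : Type*} [TopologicalSpace X] (W A : Set X)
    (hW : IsOpen W) (hA : BOpen A) : BOpen (W ∩ A) := by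
  intro x hx
  rcases hA hx.2 with h | h
  · left
    have : x ∈ W ∩ closure (interior A) := ⟨hx.1, h⟩
    have h2 : W ∩ closure (interior A) ⊆ closure (W ∩ interior A) :=
      hW.inter_closure
    have h3 : W ∩ interior A = interior (W ∩ A) := by
      rw [interior_inter, hW.interior_eq]
    exact (h3 ▸ h2) this
  · right
    have h2 : W ∩ interior (closure A) ⊆ interior (closure (W ∩ A)) := by
      apply interior_maximal
      · intro y hy
        have : y ∈ W ∩ closure A := ⟨hy.1, interior_subset hy.2⟩
        exact hW.inter_closure this
      · exact hW.inter isOpen_interior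
    exact h2 ⟨hx.1, h⟩
end

section
/- Let X be a topological space and let T₁, T₂ be operators associated with the topology on X such that T₁(W ∩ B) = T₁(W) ∩ T₁(B) and T₂(W ∩ B) = T₂(W) ∩ T₂(B) for every open set W ⊆ X and every subset B ⊆ X. If W is open in X and V is T*₁₂-open, then W ∩ V is T*₁₂-open. -/
/-- Given two operators `T₁ T₂ : Set X → Set X`, a subset `A` is `T*₁₂`-open
if `A ⊆ T₁ A ∪ T₂ A`. -/
def T12Open {X : Type*} (T₁ T₂ : Set X → Set X) (A : Set X) : Prop :=
  A ⊆ T₁ A ∪ T₂ A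

/-- If `T₁, T₂` are operators associated with the topology on `X` that distribute over
intersections of an open set with an arbitrary set, then the intersection of an open set
with a `T*₁₂`-open set is `T*₁₂`-open. -/
theorem inter_open_T12Open {X : Type*} [TopologicalSpace X] (T₁ T₂ : Set X → Set X)
    (hT₁ : ∀ W : Set X, IsOpen W → W ⊆ T₁ W)
    (hT₂ : ∀ W : Set X, IsOpen W → W ⊆ T₂ W)
    (hT₁inter : ∀ (W B : Set X), IsOpen W → T₁ (W ∩ B) = T₁ W ∩ T₁ B)
    (hT₂inter : ∀ (W B : Set X), IsOpen W → T₂ (W ∩ B) = T₂ W ∩ T₂ B)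
    (W V : Set X) (hW : IsOpen W) (hV : T12Open T₁ T₂ V) :
    T12Open T₁ T₂ (W ∩ V) := by
  intro x hx
  rw [hT₁inter W V hW, hT₂inter W V hW]
  rcases hV hx.2 with h | h
  · exact Or.inl ⟨hT₁ W hW hx.1, h⟩
  · exact Or.inr ⟨hT₂ W hW hx.1, h⟩
end

section
/- Let X and Y be topological spaces, let T₁, T₂ be operators associated with the topology on X, let f : X → Y be a function, and let g : X → X × Y be the graph function defined by g(x) = (x, f(x)), where X × Y carries the product topology. If g is contra-T*₁₂-continuous (g⁻¹(W) is T*₁₂-closed in X for every open W ⊆ X × Y), then f is contra-T*₁₂-continuous (f⁻¹(V) is T*₁₂-closed in X for every open V ⊆ Y). -/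
/-- A subset is `T*₁₂`-closed if its complement is `T*₁₂`-open. -/
def T12Closed {X : Type*} (T₁ T₂ : Set X → Set X) (A : Set X) : Prop :=
  T12Open T₁ T₂ Aᶜ

/-- If the graph function `g : X → X × Y`, `g x = (x, f x)`, is
contra-`T*₁₂`-continuous, then `f` is contra-`T*₁₂`-continuous. -/
theorem contraT12Continuous_of_graphFunction {X Y : Type*}
    [TopologicalSpace X] [TopologicalSpace Y] (T₁ T₂ : Set X → Set X)
    (hT₁ : ∀ W : Set X, IsOpen W → W ⊆ T₁ W)
    (hT₂ : ∀ W : Set X, IsOpen W → W ⊆ T₂ W)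
    (f : X → Y)
    (hg : ∀ W : Set (X × Y), IsOpen W → T12Closed T₁ T₂ ((fun x => (x, f x)) ⁻¹' W)) :
    ∀ V : Set Y, IsOpen V → T12Closed T₁ T₂ (f ⁻¹' V) := by
  intro V hV
  have : f ⁻¹' V = (fun x => (x, f x)) ⁻¹' (Set.univ ×ˢ V) := by
    ext x; simp
  rw [this]
  exact hg _ (isOpen_univ.prod hV)
end

section
/- Let X and Y be topological spaces with Y a Urysohn (T2.5) space, and let T₁, T₂ be operators associated with the topology on X such that Tⱼ(W ∩ B) = Tⱼ(W) ∩ Tⱼ(B) for j = 1, 2, every open W ⊆ X and every B ⊆ X, and such that T₁ and T₂ commute with arbitrary unions of subsets of X. If f : X → Y is contra-T*₁₂-continuous and g : X → Y is contra-continuous, then the set E = {x ∈ X | f(x) = g(x)} is T*₁₂-closed in X. -/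
/-- T12Open is closed under unions, given the union hypotheses. -/
theorem t12Open_sUnion {X : Type*} (T₁ T₂ : Set X → Set X)
    (hT₁union : ∀ 𝒜 : Set (Set X), T₁ (⋃₀ 𝒜) = ⋃ A ∈ 𝒜, T₁ A)
    (hT₂union : ∀ 𝒜 : Set (Set X), T₂ (⋃₀ 𝒜) = ⋃ A ∈ 𝒜, T₂ A)
    (𝒜 : Set (Set X)) (h : ∀ A ∈ 𝒜, T12Open T₁ T₂ A) :
    T12Open T₁ T₂ (⋃₀ 𝒜) := by
  intro x hx
  obtain ⟨A, hA, hxA⟩ := hx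
  rcases h A hA hxA with h1 | h2
  · left
    rw [hT₁union]
    exact Set.mem_biUnion hA h1
  · right
    rw [hT₂union]
    exact Set.mem_biUnion hA h2

/-- Intersection of an open set with a T12Open set is T12Open. -/
theorem t12Open_inter_open {X : Type*} [TopologicalSpace X] (T₁ T₂ : Set X → Set X)
    (hT₁ : ∀ W : Set X, IsOpen W → W ⊆ T₁ W)
    (hT₂ : ∀ W : Set X, IsOpen W → W ⊆ T₂ W)
    (hT₁inter : ∀ (W B : Set X), IsOpen W → T₁ (W ∩ B) = T₁ W ∩ T₁ B)
    (hT₂inter : ∀ (W B : Set X), IsOpen W → T₂ (W ∩ B) = T₂ W ∩ T₂ B)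
    (W B : Set X) (hW : IsOpen W) (hB : T12Open T₁ T₂ B) :
    T12Open T₁ T₂ (W ∩ B) := by
  intro x hx
  rcases hB hx.2 with h1 | h2
  · left
    rw [hT₁inter W B hW]
    exact ⟨hT₁ W hW hx.1, h1⟩
  · right
    rw [hT₂inter W B hW]
    exact ⟨hT₂ W hW hx.1, h2⟩

/-- If `Y` is Urysohn, `f` is contra-`T*₁₂`-continuous and `g` is contra-continuous,
then the agreement set `{x | f x = g x}` is `T*₁₂`-closed. -/
theorem agreementSet_T12Closed {X Y : Type*}
    [TopologicalSpace X] [TopologicalSpace Y] [T25Space Y] (T₁ T₂ : Set X → Set X)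
    (hT₁ : ∀ W : Set X, IsOpen W → W ⊆ T₁ W)
    (hT₂ : ∀ W : Set X, IsOpen W → W ⊆ T₂ W)
    (hT₁inter : ∀ (W B : Set X), IsOpen W → T₁ (W ∩ B) = T₁ W ∩ T₁ B)
    (hT₂inter : ∀ (W B : Set X), IsOpen W → T₂ (W ∩ B) = T₂ W ∩ T₂ B)
    (hT₁union : ∀ 𝒜 : Set (Set X), T₁ (⋃₀ 𝒜) = ⋃ A ∈ 𝒜, T₁ A)
    (hT₂union : ∀ 𝒜 : Set (Set X), T₂ (⋃₀ 𝒜) = ⋃ A ∈ 𝒜, T₂ A)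
    (f g : X → Y)
    (hf : ∀ V : Set Y, IsOpen V → T12Closed T₁ T₂ (f ⁻¹' V))
    (hg : ∀ V : Set Y, IsOpen V → IsClosed (g ⁻¹' V)) :
    T12Closed T₁ T₂ {x : X | f x = g x} := by
  set E : Set X := {x : X | f x = g x}
  set 𝒜 : Set (Set X) := {A | T12Open T₁ T₂ A ∧ A ⊆ Eᶜ}
  have hsub : Eᶜ ⊆ ⋃₀ 𝒜 := by
    intro x hx
    have hne : f x ≠ g x := hx
    obtain ⟨u, hfu, hu, v, hgv, hv, hdis⟩ := exists_open_nhds_disjoint_closure hne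
    refine ⟨g ⁻¹' closure v ∩ f ⁻¹' closure u, ⟨?_, ?_⟩, ?_, ?_⟩
    · -- T12Open
      apply t12Open_inter_open T₁ T₂ hT₁ hT₂ hT₁inter hT₂inter
      · have := hg (closure v)ᶜ (isClosed_closure.isOpen_compl)
        have : IsOpen (g ⁻¹' closure v) := by
          simpa [Set.preimage_compl] using this.isOpen_compl
        exact this
      · have h := hf (closure u)ᶜ (isClosed_closure.isOpen_compl)
        unfold T12Closed at h
        simpa [Set.preimage_compl, compl_compl] using h
    · -- subset of Eᶜ
      intro y hy heq
      have h1 : g y ∈ closure v := hy.1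
      have h2 : f y ∈ closure u := hy.2
      have : f y = g y := heq
      exact hdis.ne_of_mem h2 h1 this
    · exact subset_closure hgv
    · exact subset_closure hfu
  have hopen : T12Open T₁ T₂ (⋃₀ 𝒜) :=
    t12Open_sUnion T₁ T₂ hT₁union hT₂union 𝒜 fun A hA => hA.1
  have heq : Eᶜ = ⋃₀ 𝒜 :=
    le_antisymm hsub (Set.sUnion_subset fun A hA => hA.2)
  unfold T12Closed T12Open
  rw [heq]
  exact hopen
end

section
/- Let X and Y be topological spaces with Y a Urysohn (T2.5) space, and let T₁, T₂ be operators associated with the topology on X such that Tⱼ(W ∩ B) = Tⱼ(W) ∩ Tⱼ(B) for j = 1, 2, every open W ⊆ X and every B ⊆ X, and such that T₁ and T₂ commute with arbitrary unions of subsets of X. Suppose f : X → Y is contra-T*₁₂-continuous, g : X → Y is contra-continuous, A ⊆ X is T*₁₂-dense in X, and f(x) = g(x) for every x ∈ A. Then f = g on all of X. -/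
/-- The `T*₁₂`-closure of `B` is the intersection of all `T*₁₂`-closed sets
containing `B`. -/
def T12Cl {X : Type*} (T₁ T₂ : Set X → Set X) (B : Set X) : Set X :=
  ⋂₀ {C : Set X | T12Closed T₁ T₂ C ∧ B ⊆ C}

/-- If `Y` is Urysohn, `f` is contra-`T*₁₂`-continuous, `g` is contra-continuous,
and `f = g` on a `T*₁₂`-dense set `A`, then `f = g` on all of `X`. -/
theorem eq_of_eqOn_T12Dense {X Y : Type*}
    [TopologicalSpace X] [TopologicalSpace Y] [T25Space Y] (T₁ T₂ : Set X → Set X)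
    (hT₁ : ∀ W : Set X, IsOpen W → W ⊆ T₁ W)
    (hT₂ : ∀ W : Set X, IsOpen W → W ⊆ T₂ W)
    (hT₁inter : ∀ (W B : Set X), IsOpen W → T₁ (W ∩ B) = T₁ W ∩ T₁ B)
    (hT₂inter : ∀ (W B : Set X), IsOpen W → T₂ (W ∩ B) = T₂ W ∩ T₂ B)
    (hT₁union : ∀ 𝒜 : Set (Set X), T₁ (⋃₀ 𝒜) = ⋃ A ∈ 𝒜, T₁ A)
    (hT₂union : ∀ 𝒜 : Set (Set X), T₂ (⋃₀ 𝒜) = ⋃ A ∈ 𝒜, T₂ A)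
    (f g : X → Y)
    (hf : ∀ V : Set Y, IsOpen V → T12Closed T₁ T₂ (f ⁻¹' V))
    (hg : ∀ V : Set Y, IsOpen V → IsClosed (g ⁻¹' V))
    (A : Set X) (hdense : T12Cl T₁ T₂ A = Set.univ)
    (heq : ∀ x ∈ A, f x = g x) :
    ∀ x : X, f x = g x := by

  intro x
  by_contra hxy
  obtain ⟨U, hxU, hU, V, hgV, hV, hdisj⟩ := exists_open_nhds_disjoint_closure hxy
  -- Q = f⁻¹(closure U) is T12-open
  have hQ : T12Open T₁ T₂ (f ⁻¹' closure U) := by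
    have := hf (closure U)ᶜ (isClosed_closure.isOpen_compl)
    simpa [T12Closed, T12Open, Set.preimage_compl, compl_compl] using this
  -- P = g⁻¹(closure V) is open
  have hP : IsOpen (g ⁻¹' closure V) := by
    have := hg (closure V)ᶜ (isClosed_closure.isOpen_compl)
    simpa [Set.preimage_compl, ← isOpen_compl_iff, compl_compl] using this
  set O : Set X := g ⁻¹' closure V ∩ f ⁻¹' closure U with hO
  have hOopen : T12Open T₁ T₂ O := by
    intro z hz
    have h1 : z ∈ T₁ (g ⁻¹' closure V) ∪ T₂ (g ⁻¹' closure V) :=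
      Set.mem_union_left _ (hT₁ _ hP hz.1)
    have h2 : z ∈ T₂ (g ⁻¹' closure V) := hT₂ _ hP hz.1
    have hq := hQ hz.2
    rw [hT₁inter _ _ hP, hT₂inter _ _ hP]
    rcases hq with hq | hq
    · exact Or.inl ⟨hT₁ _ hP hz.1, hq⟩
    · exact Or.inr ⟨h2, hq⟩
  have hC : T12Closed T₁ T₂ Oᶜ := by
    simpa [T12Closed, compl_compl] using hOopen
  have hAsub : A ⊆ Oᶜ := by
    intro a ha hmem
    have : f a ∈ closure U ∩ closure V := ⟨hmem.2, heq a ha ▸ hmem.1⟩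
    exact hdisj.ne_of_mem this.1 this.2 rfl
  have hxcl : x ∈ T12Cl T₁ T₂ A := by rw [hdense]; trivial
  have : x ∈ Oᶜ := hxcl Oᶜ ⟨hC, hAsub⟩
  exact this ⟨subset_closure hgV, subset_closure hxU⟩
end

section
/- Let X and Y be topological spaces, let T₁, T₂ be operators associated with the topology on X, and suppose X is T*₁₂-connected. If f : X → Y is a surjective contra-T*₁₂-continuous function and Y has at least two points, then Y is not discrete, i.e. there exists a subset of Y that is not open. -/
/-- `X` is `T*₁₂`-connected if it is not the union of two disjoint nonempty
`T*₁₂`-open sets. -/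
def T12Connected {X : Type*} (T₁ T₂ : Set X → Set X) : Prop :=
  ¬ ∃ U V : Set X, T12Open T₁ T₂ U ∧ T12Open T₁ T₂ V ∧ U.Nonempty ∧ V.Nonempty ∧
      U ∩ V = ∅ ∧ U ∪ V = Set.univ

/-- If `f : X → Y` is a surjective contra-`T*₁₂`-continuous function on a
`T*₁₂`-connected space and `Y` has at least two points, then `Y` is not discrete. -/
theorem not_discrete_of_contraT12Continuous {X Y : Type*}
    [TopologicalSpace X] [TopologicalSpace Y] (T₁ T₂ : Set X → Set X)
    (hT₁ : ∀ W : Set X, IsOpen W → W ⊆ T₁ W)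
    (hT₂ : ∀ W : Set X, IsOpen W → W ⊆ T₂ W)
    (hconn : T12Connected T₁ T₂)
    (f : X → Y) (hsurj : Function.Surjective f)
    (hf : ∀ V : Set Y, IsOpen V → T12Closed T₁ T₂ (f ⁻¹' V))
    (hY : ∃ y₁ y₂ : Y, y₁ ≠ y₂) :
    ∃ S : Set Y, ¬ IsOpen S := by
  by_contra h
  push_neg at h
  obtain ⟨y₁, y₂, hne⟩ := hY
  apply hconn
  refine ⟨f ⁻¹' {y₁}, f ⁻¹' {y₁}ᶜ, ?_, ?_, ?_, ?_, ?_, ?_⟩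
  · have := hf {y₁}ᶜ (h _)
    simpa [T12Closed, Set.preimage_compl] using this
  · have := hf {y₁} (h _)
    simpa [T12Closed, Set.preimage_compl] using this
  · obtain ⟨x, hx⟩ := hsurj y₁; exact ⟨x, hx⟩
  · obtain ⟨x, hx⟩ := hsurj y₂
    exact ⟨x, by simp [hx, hne.symm]⟩
  · ext x; simp
  · ext x; simp [em]
end
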